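/- Let G be a finite group acting by homeomorphisms on a locally connected space B, let b : B → A be an open continuous surjection such that b(x) = b(y) iff x and y are in the same G-orbit, and let K be the set of points x ∈ B not having a neighborhood V with g·V ∩ V = ∅ for all g ≠ e. If K is negligible in B, then the image I = b(K) is negligible in A, and moreover a subset element of A is negligible if and only if its pullback under b is negligible in B; consequently b is diffuse. -/

import Mathlib

open Set Topology

/-- An open subset `U` is Z-dense if it meets every non-empty open connected set
in a non-empty connected set. -/
def IsZDense {X : Type*} [TopologicalSpace X] (U : Set X) : Prop :=
  IsOpen U ∧ ∀ C : Set X, IsOpen C → IsConnected C → IsConnected (U ∩ C)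

/-- A subset is negligible if its complement is Z-dense. -/
def IsNegligible {X : Type*} [TopologicalSpace X] (I : Set X) : Prop :=
  IsZDense Iᶜ

/-- A negligible subset element `(U, I)`: `U` open, `I ⊆ U`, the subspace `U`
locally connected, and `I` negligible in the subspace `U`. -/
def NegligibleElem {Y : Type*} [TopologicalSpace Y] (U I : Set Y) : Prop :=
  IsOpen U ∧ I ⊆ U ∧ LocallyConnectedSpace ↥U ∧
    IsNegligible ((Subtype.val ⁻¹' I : Set ↥U))

/-- A continuous function is diffuse if it pulls back negligible subset elements
to negligible subset elements. -/
def Diffuse {X Y : Type*} [TopologicalSpace X] [TopologicalSpace Y] (f : X → Y) : Prop :=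
  Continuous f ∧ ∀ U I : Set Y, NegligibleElem U I → NegligibleElem (f ⁻¹' U) (f ⁻¹' I)

open Pointwise

/-- The upper ramification set of a group action: points having no neighborhood
`V` with `g • V ∩ V = ∅` for all non-identity `g`. -/
def upperRamification (G : Type*) {B : Type*} [Group G] [TopologicalSpace B]
    [MulAction G B] : Set B :=
  {x : B | ¬ ∃ V : Set B, IsOpen V ∧ x ∈ V ∧ ∀ g : G, g ≠ 1 → Disjoint (g • V) V}

/-!
Off the ramification set `K` the orbit map `b` is injective near every point, hence a local
homeomorphism, so for a small connected open `W ⊆ Kᶜ` the set `W \ b⁻¹ I` is connected as soon as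
`b W \ I` is. For a connected open `E ⊆ b⁻¹ U`, chaining such neighbourhoods along the connected set
`E \ K` shows that `(E \ K) \ b⁻¹ I` is connected, and it is dense in `E \ b⁻¹ I` since `Kᶜ` is
dense. Conversely, `G` permutes the connected components of `b⁻¹ C` for a connected open `C ⊆ A`,
so the open map `b` sends each of them onto `C`; this pushes negligibility down from `B` to `A`,
and `b⁻¹ (b K) = K` by the `G`-invariance of `K`.
-/

section Negligible

variable {X Y : Type*} [TopologicalSpace X] [TopologicalSpace Y]

def IsNegligibleIn (U I : Set X) : Prop :=
  IsOpen (U \ I) ∧ ∀ C ⊆ U, IsOpen C → IsConnected C → IsConnected (C \ I)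

theorem isNegligibleIn_univ_iff {I : Set X} : IsNegligibleIn univ I ↔ IsNegligible I := by
  simp only [IsNegligibleIn, IsNegligible, IsZDense, subset_univ, true_imp_iff, sdiff_eq,
    inter_univ, inter_comm]

theorem Topology.IsInducing.isConnected_image {f : X → Y} (hf : IsInducing f) {s : Set X} :
    IsConnected (f '' s) ↔ IsConnected s := by
  simp only [IsConnected, image_nonempty, hf.isPreconnected_image]

theorem isNegligible_preimage_val_iff {U I : Set X} (hU : IsOpen U) :
    IsNegligible (Subtype.val ⁻¹' I : Set U) ↔ IsNegligibleIn U I := by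
  have e := hU.isOpenEmbedding_subtypeVal
  refine and_congr ?_ ?_
  · rw [e.isOpen_iff_image_isOpen, ← preimage_compl, Subtype.image_preimage_coe, sdiff_eq]
  · conv_rhs => rw [← Subtype.range_coe (s := U)]
    rw [forall_subset_range_iff]
    refine forall_congr' fun C => ?_
    rw [← e.isOpen_iff_image_isOpen, e.isInducing.isConnected_image, ← image_sdiff_preimage,
      e.isInducing.isConnected_image, inter_comm, ← sdiff_eq]

theorem IsNegligible.dense_compl [LocallyConnectedSpace X] {K : Set X} (hK : IsNegligible K) :
    Dense Kᶜ := by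
  refine dense_iff_inter_open.2 fun U hU ⟨x, hx⟩ => ?_
  obtain ⟨V, hVU, hVo, -, hVc⟩ :=
    locallyConnectedSpace_iff_subsets_isOpen_isConnected.1 ‹_› x U (hU.mem_nhds hx)
  exact (hK.2 V hVo hVc).nonempty.mono fun y hy => ⟨hVU hy.2, hy.1⟩

theorem IsPreconnected.sdiff_of_forall_nhds {E J : Set X} (hE : IsPreconnected E) (hEo : IsOpen E)
    (h : ∀ x ∈ E, ∀ N ∈ 𝓝 x, ∃ W ⊆ N, IsOpen W ∧ x ∈ W ∧ IsConnected (W \ J)) :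
    IsPreconnected (E \ J) := by
  rw [isPreconnected_iff_subset_of_disjoint]
  intro u v hu hv huv huv'
  -- `P u` and `P v` are disjoint open sets covering `E`, so `E` lies in one of them.
  set P : Set X → Set X := fun t =>
    {x | ∃ W ⊆ E, IsOpen W ∧ x ∈ W ∧ IsConnected (W \ J) ∧ W \ J ⊆ t}
  have hPopen (t : Set X) : IsOpen (P t) := by
    refine isOpen_iff_forall_mem_open.2 fun x ⟨W, hWE, hWo, hxW, _, hWt⟩ =>
      ⟨W, fun y hy => ?_, hWo, hxW⟩
    obtain ⟨W', hW'W, hW'o, hyW', hW'c⟩ := h y (hWE hy) W (hWo.mem_nhds hy)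
    exact ⟨W', hW'W.trans hWE, hW'o, hyW', hW'c, (sdiff_subset_sdiff_left hW'W).trans hWt⟩
  have hcover : E ⊆ P u ∪ P v := by
    intro x hx
    obtain ⟨W, hWE, hWo, hxW, hWc⟩ := h x hx E (hEo.mem_nhds hx)
    have hWJ : W \ J ⊆ E \ J := sdiff_subset_sdiff_left hWE
    have hWuv : (W \ J) ∩ (u ∩ v) = ∅ := subset_empty_iff.1 (huv' ▸ inter_subset_inter_left _ hWJ)
    exact (isPreconnected_iff_subset_of_disjoint.1 hWc.isPreconnected u v hu hv
      (hWJ.trans huv) hWuv).imp (fun hWu => ⟨W, hWE, hWo, hxW, hWc, hWu⟩)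
      (fun hWv => ⟨W, hWE, hWo, hxW, hWc, hWv⟩)
  have hdisj : E ∩ (P u ∩ P v) = ∅ := by
    refine eq_empty_of_forall_notMem fun x ⟨hx, ⟨W₁, hW₁E, hW₁o, hxW₁, _, hW₁u⟩,
      ⟨W₂, _, hW₂o, hxW₂, _, hW₂v⟩⟩ => ?_
    obtain ⟨W, hW, -, -, hWc⟩ :=
      h x hx (W₁ ∩ W₂) (Filter.inter_mem (hW₁o.mem_nhds hxW₁) (hW₂o.mem_nhds hxW₂))
    obtain ⟨z, hzW, hzJ⟩ := hWc.nonempty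
    have hz : z ∈ (E \ J) ∩ (u ∩ v) :=
      ⟨⟨hW₁E (hW hzW).1, hzJ⟩, hW₁u ⟨(hW hzW).1, hzJ⟩, hW₂v ⟨(hW hzW).2, hzJ⟩⟩
    rwa [huv'] at hz
  have hsub (t : Set X) (hEt : E ⊆ P t) : E \ J ⊆ t := by
    rintro x ⟨hxE, hxJ⟩
    obtain ⟨W, -, -, hxW, -, hWt⟩ := hEt hxE
    exact hWt ⟨hxW, hxJ⟩
  exact (isPreconnected_iff_subset_of_disjoint.1 hE _ _ (hPopen u) (hPopen v) hcover hdisj).imp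
    (hsub u) (hsub v)

theorem IsConnected.sdiff_preimage_of_injOn {f : X → Y} (hf : IsOpenMap f) {W : Set X}
    (hW : IsOpen W) (hinj : InjOn f W) {I : Set Y} (h : IsConnected (f '' W \ I)) :
    IsConnected (W \ f ⁻¹' I) := by
  have hpre := h.preimage_of_isOpenMap hinj.injective (hf.domRestrict hW)
    (by rw [range_domRestrict]; exact sdiff_subset)
  convert hpre.image _ continuous_subtype_val.continuousOn using 1
  ext x
  simp only [mem_image, mem_preimage, mem_sdiff, Subtype.exists, domRestrict_apply]
  aesop

end Negligible

section LocalInjectivity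

variable {B A : Type*} [TopologicalSpace B] [LocallyConnectedSpace B] [TopologicalSpace A]
  {b : B → A}

theorem exists_isConnected_sdiff_preimage_of_injOn (hb : Continuous b) (hbo : IsOpenMap b)
    {U I : Set A} (hUI : IsNegligibleIn U I) {x : B} {V : Set B} (hV : V ∈ 𝓝 x)
    (hinj : InjOn b V) {N : Set B} (hN : N ∈ 𝓝 x) (hNU : N ⊆ b ⁻¹' U) :
    ∃ W ⊆ N, IsOpen W ∧ x ∈ W ∧ IsConnected (W \ b ⁻¹' I) := by
  have hx : x ∈ interior (N ∩ V) := mem_interior_iff_mem_nhds.2 (Filter.inter_mem hN hV)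
  set W := connectedComponentIn (interior (N ∩ V)) x
  have hWNV : W ⊆ N ∩ V := (connectedComponentIn_subset _ _).trans interior_subset
  have hWo : IsOpen W := isOpen_interior.connectedComponentIn
  have hWc : IsConnected W := isConnected_connectedComponentIn_iff.2 hx
  refine ⟨W, fun y hy => (hWNV hy).1, hWo, mem_connectedComponentIn hx, ?_⟩
  refine IsConnected.sdiff_preimage_of_injOn hbo hWo (hinj.mono fun y hy => (hWNV hy).2) ?_
  exact hUI.2 _ (image_subset_iff.2 fun y hy => hNU (hWNV hy).1) (hbo _ hWo)
    (hWc.image _ hb.continuousOn)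

theorem IsNegligibleIn.preimage (hb : Continuous b) (hbo : IsOpenMap b) {K : Set B}
    (hK : IsNegligible K) (hinj : ∀ x ∉ K, ∃ V ∈ 𝓝 x, InjOn b V) {U I : Set A}
    (hUI : IsNegligibleIn U I) : IsNegligibleIn (b ⁻¹' U) (b ⁻¹' I) := by
  refine ⟨by rw [← preimage_sdiff]; exact hUI.1.preimage hb, fun E hEU hEo hEc => ?_⟩
  have hE'o : IsOpen (E ∩ Kᶜ) := hEo.inter hK.1
  have hE'c : IsConnected (E ∩ Kᶜ) := inter_comm Kᶜ E ▸ hK.2 E hEo hEc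
  have hbasis : ∀ x ∈ E ∩ Kᶜ, ∀ N ∈ 𝓝 x,
      ∃ W ⊆ N, IsOpen W ∧ x ∈ W ∧ IsConnected (W \ b ⁻¹' I) := by
    rintro x ⟨hxE, hxK⟩ N hN
    obtain ⟨V, hV, hVinj⟩ := hinj x hxK
    obtain ⟨W, hWN, hW⟩ := exists_isConnected_sdiff_preimage_of_injOn hb hbo hUI hV hVinj
      (Filter.inter_mem hN (hEo.mem_nhds hxE)) (inter_subset_right.trans hEU)
    exact ⟨W, hWN.trans inter_subset_left, hW⟩
  obtain ⟨x, hx⟩ := hE'c.nonempty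
  obtain ⟨W, hWE, -, -, hWc⟩ := hbasis x hx _ (hE'o.mem_nhds hx)
  have hconn : IsConnected ((E ∩ Kᶜ) \ b ⁻¹' I) :=
    ⟨hWc.nonempty.mono (sdiff_subset_sdiff_left hWE),
      hE'c.isPreconnected.sdiff_of_forall_nhds hE'o hbasis⟩
  have hEIo : IsOpen (E \ b ⁻¹' I) := by
    convert hEo.inter (hUI.1.preimage hb) using 1
    ext y
    exact ⟨fun hy => ⟨hy.1, hEU hy.1, hy.2⟩, fun hy => ⟨hy.1, hy.2.2⟩⟩
  refine hconn.subset_closure (sdiff_subset_sdiff_left inter_subset_left) ?_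
  simpa only [inter_sdiff_right_comm] using hK.dense_compl.open_subset_closure_inter hEIo

end LocalInjectivity

section OrbitMap

variable {G B A : Type*} [Group G] [MulAction G B] {b : B → A}

theorem smul_preimage_of_apply_smul {g : G} (hg : ∀ x, b (g • x) = b x) (C : Set A) :
    g • b ⁻¹' C = b ⁻¹' C := by
  ext y
  rw [mem_smul_set_iff_inv_smul_mem, mem_preimage, mem_preimage, ← hg, smul_inv_smul]

variable [TopologicalSpace B]

theorem smul_connectedComponentIn [ContinuousConstSMul G B] (g : G) {D : Set B} (hD : g • D = D)
    {x : B} (hx : x ∈ D) : g • connectedComponentIn D x = connectedComponentIn D (g • x) := by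
  have h := (Homeomorph.smul g).image_connectedComponentIn hx
  change (g • ·) '' _ = connectedComponentIn ((g • ·) '' D) (g • x) at h
  rwa [image_smul, image_smul, hD] at h

theorem notMem_upperRamification_iff {x : B} : x ∉ upperRamification G ↔
    ∃ V : Set B, IsOpen V ∧ x ∈ V ∧ ∀ g : G, g ≠ 1 → Disjoint (g • V) V :=
  not_not

theorem exists_mem_nhds_injOn_of_notMem_upperRamification
    (hfib : ∀ x y, b x = b y ↔ ∃ g : G, g • x = y) {x : B} (hx : x ∉ upperRamification G) :
    ∃ V ∈ 𝓝 x, InjOn b V := by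
  obtain ⟨V, hVo, hxV, hV⟩ := notMem_upperRamification_iff.1 hx
  refine ⟨V, hVo.mem_nhds hxV, fun y hy z hz hyz => ?_⟩
  obtain ⟨g, rfl⟩ := (hfib y z).1 hyz
  by_cases hg : g = 1
  · rw [hg, one_smul]
  · exact (disjoint_left.1 (hV g hg) (smul_mem_smul_set hy) hz).elim

theorem smul_notMem_upperRamification [ContinuousConstSMul G B] {x : B}
    (hx : x ∉ upperRamification G) (g : G) : g • x ∉ upperRamification G := by
  obtain ⟨V, hVo, hxV, hV⟩ := notMem_upperRamification_iff.1 hx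
  refine notMem_upperRamification_iff.2 ⟨g • V, hVo.smul g, smul_mem_smul_set hxV, fun h hh => ?_⟩
  have hconj : h • g • V = g • (g⁻¹ * h * g) • V := by
    rw [smul_smul, smul_smul, ← mul_assoc, ← mul_assoc, mul_inv_cancel, one_mul]
  rw [hconj, disjoint_smul_set]
  exact hV _ fun h1 => hh (by rwa [mul_assoc, inv_mul_eq_one, right_eq_mul] at h1)

theorem preimage_image_upperRamification [ContinuousConstSMul G B]
    (hfib : ∀ x y, b x = b y ↔ ∃ g : G, g • x = y) :
    b ⁻¹' (b '' upperRamification G) = upperRamification G := by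
  refine (subset_preimage_image _ _).antisymm' fun y ⟨k, hk, hky⟩ => ?_
  obtain ⟨g, rfl⟩ := (hfib k y).1 hky
  by_contra hgk
  exact smul_notMem_upperRamification hgk g⁻¹ (by rwa [inv_smul_smul])

variable [TopologicalSpace A]

theorem image_connectedComponentIn_preimage [LocallyConnectedSpace B] [ContinuousConstSMul G B]
    (hq : IsOpenQuotientMap b) (hfib : ∀ x y, b x = b y ↔ ∃ g : G, g • x = y) {C : Set A}
    (hCo : IsOpen C) (hC : IsPreconnected C) {x : B} (hx : b x ∈ C) :
    b '' connectedComponentIn (b ⁻¹' C) x = C := by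
  set D := b ⁻¹' C
  set E := connectedComponentIn D x
  have hDo : IsOpen D := hCo.preimage hq.continuous
  have hsat : ∀ y ∈ D, ∀ z ∈ connectedComponentIn D y, b z ∈ b '' E → b y ∈ b '' E := by
    rintro y hy z hzy ⟨w, hwE, hwz⟩
    obtain ⟨g, rfl⟩ := (hfib w z).1 hwz
    have hyE : y ∈ g • E := by
      have hgD : g • D = D :=
        smul_preimage_of_apply_smul (fun y => ((hfib y _).2 ⟨g, rfl⟩).symm) C
      rw [show E = connectedComponentIn D w from connectedComponentIn_eq hwE,
        smul_connectedComponentIn g hgD (connectedComponentIn_subset _ _ hwE),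
        ← connectedComponentIn_eq hzy]
      exact mem_connectedComponentIn hy
    obtain ⟨e, he, rfl⟩ := hyE
    exact ⟨e, he, (hfib e _).2 ⟨g, rfl⟩⟩
  have hrest : IsOpen (C \ b '' E) := by
    rw [← image_preimage_eq C hq.surjective, ← image_sdiff_preimage]
    refine hq.isOpenMap _ (isOpen_iff_forall_mem_open.2 fun y hy => ?_)
    refine ⟨connectedComponentIn D y, fun z hz => ⟨connectedComponentIn_subset _ _ hz,
      fun hzE => hy.2 (hsat y hy.1 z hz hzE)⟩, hDo.connectedComponentIn,
      mem_connectedComponentIn hy.1⟩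
  refine (image_subset_iff.2 (connectedComponentIn_subset _ _)).antisymm ?_
  refine hC.subset_left_of_subset_union (hq.isOpenMap _ hDo.connectedComponentIn) hrest
    disjoint_sdiff_right (by rw [union_sdiff_self]; exact subset_union_right) ?_
  exact ⟨b x, hx, x, mem_connectedComponentIn hx, rfl⟩

theorem IsNegligibleIn.of_preimage [LocallyConnectedSpace B] [ContinuousConstSMul G B]
    (hq : IsOpenQuotientMap b) (hfib : ∀ x y, b x = b y ↔ ∃ g : G, g • x = y) {U I : Set A}
    (h : IsNegligibleIn (b ⁻¹' U) (b ⁻¹' I)) : IsNegligibleIn U I := by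
  refine ⟨hq.isQuotientMap.isOpen_preimage.1 (preimage_sdiff b U I ▸ h.1),
    fun C hCU hCo hCc => ?_⟩
  obtain ⟨x, hx⟩ := hq.surjective.nonempty_preimage.2 hCc.nonempty
  rw [← image_connectedComponentIn_preimage hq hfib hCo hCc.isPreconnected hx,
    ← image_sdiff_preimage]
  refine (h.2 _ ((connectedComponentIn_subset _ _).trans (preimage_mono hCU))
    (hCo.preimage hq.continuous).connectedComponentIn
    (isConnected_connectedComponentIn_iff.2 hx)).image _ hq.continuous.continuousOn

theorem negligibleElem_preimage_iff [LocallyConnectedSpace B] [ContinuousConstSMul G B]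
    (hq : IsOpenQuotientMap b) (hfib : ∀ x y, b x = b y ↔ ∃ g : G, g • x = y)
    (hK : IsNegligible (upperRamification G (B := B))) {U I : Set A} :
    NegligibleElem (b ⁻¹' U) (b ⁻¹' I) ↔ NegligibleElem U I := by
  have : LocallyConnectedSpace A := hq.isQuotientMap.isCoinducing.locallyConnectedSpace
  constructor
  · rintro ⟨hUo', hIU, -, hUI⟩
    have hUo : IsOpen U := hq.isQuotientMap.isOpen_preimage.1 hUo'
    refine ⟨hUo, hq.surjective.preimage_subset_preimage_iff.1 hIU, hUo.locallyConnectedSpace, ?_⟩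
    exact (isNegligible_preimage_val_iff hUo).2
      (((isNegligible_preimage_val_iff hUo').1 hUI).of_preimage hq hfib)
  · rintro ⟨hUo, hIU, -, hUI⟩
    have hUo' := hUo.preimage hq.continuous
    refine ⟨hUo', preimage_mono hIU, hUo'.locallyConnectedSpace, ?_⟩
    exact (isNegligible_preimage_val_iff hUo').2
      (((isNegligible_preimage_val_iff hUo).1 hUI).preimage hq.continuous hq.isOpenMap hK
        fun _ hx => exists_mem_nhds_injOn_of_notMem_upperRamification hfib hx)

end OrbitMap

theorem quotient_negligible_ramification_general
    {G B A : Type*} [Group G] [TopologicalSpace B]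
    [LocallyConnectedSpace B] [TopologicalSpace A] [MulAction G B]
    (hcont : ∀ g : G, Continuous fun x : B => g • x)
    (b : B → A) (hb : Continuous b) (hopen : IsOpenMap b)
    (hsurj : Function.Surjective b)
    (hfib : ∀ x y : B, b x = b y ↔ ∃ g : G, g • x = y)
    (hK : IsNegligible (upperRamification G (B := B))) :
    IsNegligible (b '' upperRamification G (B := B)) ∧
      (∀ U I : Set A, NegligibleElem U I ↔ NegligibleElem (b ⁻¹' U) (b ⁻¹' I)) ∧
      Diffuse b := by
  have : ContinuousConstSMul G B := ⟨hcont⟩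
  have hq : IsOpenQuotientMap b := ⟨hsurj, hb, hopen⟩
  have hiff (U I : Set A) : NegligibleElem U I ↔ NegligibleElem (b ⁻¹' U) (b ⁻¹' I) :=
    (negligibleElem_preimage_iff hq hfib hK).symm
  refine ⟨?_, hiff, hb, fun U I => (hiff U I).1⟩
  rw [← isNegligibleIn_univ_iff] at hK ⊢
  refine IsNegligibleIn.of_preimage hq hfib ?_
  rwa [preimage_univ, preimage_image_upperRamification hfib]

/-- For a finite group acting by homeomorphisms on a locally connected space with
negligible upper ramification set, and `b : B → A` the orbit quotient (open,
continuous, surjective), the lower ramification set `b(K)` is negligible, a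
subset element of `A` is negligible iff its pullback under `b` is, and `b` is
diffuse. -/
theorem quotient_negligible_ramification
    {G B A : Type*} [Group G] [Finite G] [TopologicalSpace B]
    [LocallyConnectedSpace B] [TopologicalSpace A] [MulAction G B]
    (hcont : ∀ g : G, Continuous fun x : B => g • x)
    (b : B → A) (hb : Continuous b) (hopen : IsOpenMap b)
    (hsurj : Function.Surjective b)
    (hfib : ∀ x y : B, b x = b y ↔ ∃ g : G, g • x = y)
    (hK : IsNegligible (upperRamification G (B := B))) :
    IsNegligible (b '' upperRamification G (B := B)) ∧
      (∀ U I : Set A, NegligibleElem U I ↔ NegligibleElem (b ⁻¹' U) (b ⁻¹' I)) ∧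
      Diffuse b :=
  quotient_negligible_ramification_general hcont b hb hopen hsurj hfib hK
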